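/- arXiv:1408.6769 — 11 statements merged into one kernel-verified Lean document; each statement's English description precedes it below -/
import Mathlib

section
/- Let f : Y → X and g : Z → Y be covering maps, and assume that for every x ∈ X the fiber f⁻¹(x) is finite. Then the composition f ∘ g : Z → X is a covering map. -/
/-!
Near `x`, `f` is the projection `U × I → U` with `I = f⁻¹' {x}` finite, so it suffices to show
that `Prod.fst ∘ g` is a covering map whenever `g : Z → X × I` is one. For each `i` the point
`(x, i)` has a `g`-evenly covered neighbourhood containing some slice `V ×ˢ {i}`; as `I` is
finite, a single open `U ∋ x` works for all `i`. Over `U` the sheets of `Prod.fst ∘ g` are then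
indexed by pairs of an `i` and a sheet of `g` over `U ×ˢ {i}`.
-/

open Set Topology

def IsTrivialOver {E X : Type*} [TopologicalSpace E] [TopologicalSpace X] (f : E → X)
    (U : Set X) (F : Type*) [TopologicalSpace F] : Prop :=
  ∃ H : f ⁻¹' U ≃ₜ U × F, ∀ e, (H e).1.1 = f e

namespace IsTrivialOver

variable {E X F : Type*} [TopologicalSpace E] [TopologicalSpace X] [TopologicalSpace F]
  {f : E → X} {U V : Set X}

theorem apply_symm {H : f ⁻¹' U ≃ₜ U × F} (hH : ∀ e, (H e).1.1 = f e) (p : U × F) :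
    f (H.symm p) = p.1 := by
  rw [← hH, H.apply_symm_apply]

theorem mono (h : IsTrivialOver f U F) (hVU : V ⊆ U) : IsTrivialOver f V F := by
  obtain ⟨H, hH⟩ := h
  refine ⟨{ toFun e := (⟨(H ⟨e, hVU e.2⟩).1, by rw [hH]; exact e.2⟩, (H ⟨e, hVU e.2⟩).2)
            invFun p := ⟨H.symm (⟨p.1, hVU p.1.2⟩, p.2), by simp [apply_symm hH]⟩
            left_inv e := by ext; simp
            right_inv p := by ext <;> simp
            continuous_toFun := by fun_prop
            continuous_invFun := by fun_prop }, fun e => by simp [hH]⟩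

end IsTrivialOver

theorem isTrivialOver_fst_comp {Z X I : Type*} [TopologicalSpace Z] [TopologicalSpace X]
    [TopologicalSpace I] [DiscreteTopology I] {J : I → Type*} [∀ i, TopologicalSpace (J i)]
    {g : Z → X × I} {U : Set X} (hg : Continuous g)
    (h : ∀ i, IsTrivialOver g (U ×ˢ {i}) (J i)) :
    IsTrivialOver (Prod.fst ∘ g) U (Σ i, J i) := by
  choose H hH using h
  let sheet (z : (Prod.fst ∘ g) ⁻¹' U) : Σ i, J i :=
    ⟨(g z).2, (H (g z).2 ⟨z, z.2, rfl⟩).2⟩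
  have sheet_eq i (z : g ⁻¹' (U ×ˢ {i})) : sheet ⟨z, z.2.1⟩ = ⟨i, (H i z).2⟩ := by
    obtain ⟨z, -, rfl⟩ := z
    rfl
  have continuous_sheet : Continuous sheet := by
    refine continuous_of_cover_nhds (s := fun i => {z | (g z).2 = i}) (fun z => ⟨_,
      (isOpen_discrete {(g z).2}).preimage (by fun_prop) |>.mem_nhds rfl⟩) fun i => ?_
    have hrestrict : sheet ∘ ((↑) : {z : (Prod.fst ∘ g) ⁻¹' U | (g z).2 = i} → _) =
        fun z => ⟨i, (H i ⟨z.1.1, z.1.2, z.2⟩).2⟩ :=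
      funext fun z => sheet_eq i ⟨z.1.1, z.1.2, z.2⟩
    rw [continuousOn_iff_continuous_domRestrict, Set.domRestrict_eq, hrestrict]
    fun_prop
  refine ⟨{ toFun z := (⟨(g z).1, z.2⟩, sheet z)
            invFun p := ⟨(H p.2.1).symm (⟨(p.1, p.2.1), p.1.2, rfl⟩, p.2.2), by
              simp [IsTrivialOver.apply_symm (hH _)]⟩
            left_inv z := by
              have hz : (H (g z).2 ⟨z, z.2, rfl⟩).1 = ⟨g z, z.2, rfl⟩ := Subtype.ext (hH _ _)
              ext
              dsimp only
              rw [← hz]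
              exact congrArg Subtype.val ((H (g z).2).symm_apply_apply ⟨z, z.2, rfl⟩)
            right_inv := by
              rintro ⟨u, i, j⟩
              have hsheet := sheet_eq i ((H i).symm (⟨(u, i), u.2, rfl⟩, j))
              rw [Homeomorph.apply_symm_apply] at hsheet
              refine Prod.ext (Subtype.ext ?_) hsheet
              simp [IsTrivialOver.apply_symm (hH i)]
            continuous_toFun := by fun_prop
            continuous_invFun := by
              rw [← ((Homeomorph.prodComm _ _).trans
                Homeomorph.sigmaProdDistrib).symm.comp_continuous_iff']
              refine continuous_sigma fun i => ?_
              exact (continuous_subtype_val.comp ((H i).symm.continuous.comp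
                (f := fun a : J i × U => (⟨(a.2.1, i), a.2.2, rfl⟩, a.1))
                (by fun_prop))).subtype_mk _ }, fun e => rfl⟩

theorem IsCoveringMap.fst_comp {Z X I : Type*} [TopologicalSpace Z] [TopologicalSpace X]
    [TopologicalSpace I] [DiscreteTopology I] [Finite I] {g : Z → X × I}
    (hg : IsCoveringMap g) : IsCoveringMap (Prod.fst ∘ g) := by
  intro x
  have slice (i : I) : ∃ V ∈ 𝓝 x, IsTrivialOver g (V ×ˢ {i}) (g ⁻¹' {(x, i)}) := by
    obtain ⟨-, W, hxW, hW, -, H, hH⟩ := hg (x, i)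
    obtain ⟨V, hV, S, hS, hVS⟩ := mem_nhds_prod_iff.1 (hW.mem_nhds hxW)
    exact ⟨V, hV, IsTrivialOver.mono ⟨H, hH⟩
      ((prod_mono_right (singleton_subset_iff.2 (mem_of_mem_nhds hS))).trans hVS)⟩
  choose V hV hgV using slice
  obtain ⟨U, hUV, hU, hxU⟩ := mem_nhds_iff.1 (Filter.iInter_mem.2 hV)
  have (i : I) : DiscreteTopology (g ⁻¹' {(x, i)}) := (hg (x, i)).1
  refine IsEvenlyCovered.to_isEvenlyCovered_preimage (I := Σ i, g ⁻¹' {(x, i)})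
    ⟨inferInstance, U, hxU, hU, hU.preimage (continuous_fst.comp hg.continuous), ?_⟩
  exact isTrivialOver_fst_comp hg.continuous fun i =>
    (hgV i).mono (prod_mono_left (hUV.trans (iInter_subset _ i)))

theorem IsEvenlyCovered.comp_isCoveringMap {E X Z I : Type*} [TopologicalSpace E]
    [TopologicalSpace X] [TopologicalSpace Z] [TopologicalSpace I] [Finite I]
    {f : E → X} {g : Z → E} {x : X} (hf : IsEvenlyCovered f x I) (hg : IsCoveringMap g) :
    IsEvenlyCovered (f ∘ g) x ((f ∘ g) ⁻¹' {x}) := by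
  obtain ⟨_, U, hxU, hU, hfU, H, hH⟩ := hf
  have hfactor : U.restrictPreimage (f ∘ g) = Prod.fst ∘ H ∘ (f ⁻¹' U).restrictPreimage g :=
    funext fun z => Subtype.ext (hH ⟨g z, z.2⟩).symm
  have hcov : IsCoveringMap (U.restrictPreimage (f ∘ g)) :=
    hfactor ▸ ((hg.restrictPreimage _).homeomorph_comp H).fst_comp
  exact IsCoveringMapOn.of_isCoveringMap_restrictPreimage _ hU (hfU.preimage hg.continuous)
    hcov x hxU

/-- The composition of two covering maps is a covering map, provided the first one has
finite fibres. -/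
theorem isCoveringMap_comp {X Y Z : Type*} [TopologicalSpace X] [TopologicalSpace Y]
    [TopologicalSpace Z] {f : Y → X} {g : Z → Y}
    (hf : IsCoveringMap f) (hg : IsCoveringMap g)
    (hfin : ∀ x : X, (f ⁻¹' {x}).Finite) :
    IsCoveringMap (f ∘ g) := fun x =>
  have := (hfin x).to_subtype
  (hf x).comp_isCoveringMap hg
end

section
/- Let f : X → Y and f' : X' → Y be covering maps with X and X' nonempty and path-connected, let g : Y → Z be a covering map with Y path-connected and Z a Hausdorff space, and assume g is normal in the sense that for all y, y' ∈ Y with g(y) = g(y') there exists a homeomorphism ψ : Y → Y with g ∘ ψ = g and ψ(y) = y'. If there is a homeomorphism φ : X → X' with g ∘ f = g ∘ f' ∘ φ, then there exists a homeomorphism ψ : Y → Y with g ∘ ψ = g and ψ ∘ f = f' ∘ φ. -/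
/-- Kühnlein's lemma on normal coverings: let `f : X → Y`, `f' : X' → Y` be coverings with
`X`, `X'` path-connected, let `g : Y → Z` be a normal covering with `Y` path-connected and
`Z` Hausdorff. If `φ : X → X'` is a homeomorphism with `g ∘ f = g ∘ f' ∘ φ`, then there is a
deck transformation `ψ` of `g` with `ψ ∘ f = f' ∘ φ`. -/
theorem deck_transformation_of_comp_eq {X X' Y Z : Type*}
    [TopologicalSpace X] [TopologicalSpace X'] [TopologicalSpace Y] [TopologicalSpace Z]
    [PathConnectedSpace X] [PathConnectedSpace X'] [PathConnectedSpace Y] [T2Space Z]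
    {f : X → Y} {f' : X' → Y} {g : Y → Z}
    (hf : IsCoveringMap f) (hf' : IsCoveringMap f') (hg : IsCoveringMap g)
    (hnormal : ∀ y y' : Y, g y = g y' →
      ∃ ψ : Y ≃ₜ Y, (∀ u, g (ψ u) = g u) ∧ ψ y = y')
    (φ : X ≃ₜ X') (hφ : ∀ x, g (f x) = g (f' (φ x))) :
    ∃ ψ : Y ≃ₜ Y, (∀ u, g (ψ u) = g u) ∧ ∀ x, ψ (f x) = f' (φ x) := by
  obtain ⟨x₀⟩ : Nonempty X := inferInstance
  obtain ⟨ψ, hψg, hψ0⟩ := hnormal (f x₀) (f' (φ x₀)) (hφ x₀)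
  refine ⟨ψ, hψg, fun x => ?_⟩
  have := hg.eq_of_comp_eq (g₁ := fun x => ψ (f x)) (g₂ := fun x => f' (φ x))
    (ψ.continuous.comp hf.continuous) (hf'.continuous.comp φ.continuous)
    (funext fun x => (hψg (f x)).trans (hφ x)) x₀ hψ0
  exact congrFun this x
end

section
/- Fix d ≥ 1 and permutations p_x, p_y of Fin d such that the subgroup of permutations generated by p_x and p_y acts transitively on Fin d. Then the subgroup generated by the M-Origami pair (m_A, m_B) associated to (p_x, p_y) acts transitively on (Fin 4) × (Fin d). -/
/-- `m_A` of the M-Origami pair associated to `(p_x, p_y)`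
(squares labelled `0,1,2,3` instead of `1,2,3,4`):
`m_A (0,j) = (1,j)`, `m_A (1,j) = (0, p_y j)`, `m_A (2,j) = (3,j)`, `m_A (3,j) = (2, p_y⁻¹ j)`. -/
def mOrigamiA {d : ℕ} (py : Equiv.Perm (Fin d)) : Equiv.Perm (Fin 4 × Fin d) :=
  Equiv.prodShear (Equiv.swap 0 1 * Equiv.swap 2 3 : Equiv.Perm (Fin 4))
    (fun i => if i = 1 then py else if i = 3 then py⁻¹ else Equiv.refl (Fin d))

/-- `m_B` of the M-Origami pair associated to `(p_x, p_y)`: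
`m_B (0,j) = (2,j)`, `m_B (1,j) = (3,j)`, `m_B (2,j) = (0, p_x⁻¹ j)`, `m_B (3,j) = (1, p_x j)`. -/
def mOrigamiB {d : ℕ} (px : Equiv.Perm (Fin d)) : Equiv.Perm (Fin 4 × Fin d) :=
  Equiv.prodShear (Equiv.swap 0 2 * Equiv.swap 1 3 : Equiv.Perm (Fin 4))
    (fun i => if i = 2 then px⁻¹ else if i = 3 then px else Equiv.refl (Fin d))

/-!
Row `0` of `Fin 4 × Fin d` is a copy of `Fin d` on which `m_A²` acts as `p_y` and `m_B²` as
`p_x⁻¹`, so every element of `⟨p_x, p_y⟩` is realised on row `0` by an element of `⟨m_A, m_B⟩`,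
and `⟨m_A, m_B⟩` acts transitively on row `0`. Every other row is reached from row `0` by
`m_A`, `m_B` or `m_A m_B`.
-/

open Equiv

namespace Equiv.Perm

variable {α β : Type*}

def intertwinedBy (K : Subgroup (Perm β)) (f : α → β) : Subgroup (Perm α) where
  carrier := {g | ∃ G ∈ K, ∀ k, G (f k) = f (g k)}
  one_mem' := ⟨1, K.one_mem, fun _ => rfl⟩
  mul_mem' := by
    rintro g h ⟨G, hG, hGg⟩ ⟨H, hH, hHh⟩
    exact ⟨G * H, K.mul_mem hG hH, fun k => by simp only [Perm.mul_apply, hHh, hGg]⟩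
  inv_mem' := by
    rintro g ⟨G, hG, hGg⟩
    refine ⟨G⁻¹, K.inv_mem hG, fun k => ?_⟩
    rw [Perm.inv_eq_iff_eq, hGg]
    simp

theorem exists_mem_apply_eq_of_intertwinedBy {K : Subgroup (Perm β)} {f : α → β}
    {H : Subgroup (Perm α)} (hH : ∀ i j, ∃ g ∈ H, g i = j) (hHK : H ≤ intertwinedBy K f)
    (hreach : ∀ p, ∃ P ∈ K, ∃ i, P (f i) = p) (p q : β) : ∃ G ∈ K, G p = q := by
  obtain ⟨P, hP, i, rfl⟩ := hreach p
  obtain ⟨Q, hQ, j, rfl⟩ := hreach q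
  obtain ⟨g, hg, rfl⟩ := hH i j
  obtain ⟨G, hG, hGg⟩ := hHK hg
  refine ⟨Q * G * P⁻¹, K.mul_mem (K.mul_mem hQ hG) (K.inv_mem hP), ?_⟩
  simp [hGg]

end Equiv.Perm

section MOrigami

variable {d : ℕ} (px py : Perm (Fin d)) (j : Fin d)

@[simp] lemma mOrigamiA_zero : mOrigamiA py (0, j) = (1, j) := by
  simp [mOrigamiA, Equiv.prodShear]; decide

@[simp] lemma mOrigamiA_one : mOrigamiA py (1, j) = (0, py j) := by
  simp [mOrigamiA, Equiv.prodShear]; decide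

@[simp] lemma mOrigamiA_two : mOrigamiA py (2, j) = (3, j) := by
  simp [mOrigamiA, Equiv.prodShear]; decide

@[simp] lemma mOrigamiB_zero : mOrigamiB px (0, j) = (2, j) := by
  simp [mOrigamiB, Equiv.prodShear]; decide

@[simp] lemma mOrigamiB_two : mOrigamiB px (2, j) = (0, px⁻¹ j) := by
  simp [mOrigamiB, Equiv.prodShear]; decide

lemma mOrigamiA_mem_closure : mOrigamiA py ∈ Subgroup.closure {mOrigamiA py, mOrigamiB px} :=
  Subgroup.subset_closure (Set.mem_insert _ _)

lemma mOrigamiB_mem_closure : mOrigamiB px ∈ Subgroup.closure {mOrigamiA py, mOrigamiB px} :=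
  Subgroup.subset_closure (Set.mem_insert_of_mem _ rfl)

lemma closure_le_intertwinedBy_mOrigami :
    Subgroup.closure {px, py} ≤ Perm.intertwinedBy (Subgroup.closure {mOrigamiA py, mOrigamiB px})
      (fun k => ((0 : Fin 4), k)) := by
  have hA := mOrigamiA_mem_closure px py
  have hB := mOrigamiB_mem_closure px py
  rw [Subgroup.closure_le, Set.insert_subset_iff, Set.singleton_subset_iff]
  constructor
  · rw [SetLike.mem_coe, ← inv_mem_iff]
    exact ⟨mOrigamiB px * mOrigamiB px, mul_mem hB hB, fun k => by simp⟩
  · exact ⟨mOrigamiA py * mOrigamiA py, mul_mem hA hA, fun k => by simp⟩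

lemma exists_mem_closure_mOrigami_apply_zero_eq (p : Fin 4 × Fin d) :
    ∃ P ∈ Subgroup.closure {mOrigamiA py, mOrigamiB px}, ∃ k, P ((0 : Fin 4), k) = p := by
  have hA := mOrigamiA_mem_closure px py
  have hB := mOrigamiB_mem_closure px py
  obtain ⟨i, k⟩ := p
  fin_cases i
  · exact ⟨1, one_mem _, k, rfl⟩
  · exact ⟨mOrigamiA py, hA, k, mOrigamiA_zero py k⟩
  · exact ⟨mOrigamiB px, hB, k, mOrigamiB_zero px k⟩
  · exact ⟨mOrigamiA py * mOrigamiB px, mul_mem hA hB, k, by simp⟩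

end MOrigami

theorem mOrigami_transitive_general {d : ℕ} (px py : Equiv.Perm (Fin d))
    (htrans : ∀ i j : Fin d,
      ∃ g ∈ Subgroup.closure ({px, py} : Set (Equiv.Perm (Fin d))), g i = j) :
    ∀ p q : Fin 4 × Fin d,
      ∃ g ∈ Subgroup.closure ({mOrigamiA py, mOrigamiB px} : Set (Equiv.Perm (Fin 4 × Fin d))),
        g p = q :=
  Perm.exists_mem_apply_eq_of_intertwinedBy htrans (closure_le_intertwinedBy_mOrigami px py)
    (exists_mem_closure_mOrigami_apply_zero_eq px py)

/-- If `⟨p_x, p_y⟩` acts transitively on `Fin d`, then the subgroup generated by the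
M-Origami pair `(m_A, m_B)` acts transitively on `Fin 4 × Fin d`. -/
theorem mOrigami_transitive {d : ℕ} (hd : 1 ≤ d) (px py : Equiv.Perm (Fin d))
    (htrans : ∀ i j : Fin d,
      ∃ g ∈ Subgroup.closure ({px, py} : Set (Equiv.Perm (Fin d))), g i = j) :
    ∀ p q : Fin 4 × Fin d,
      ∃ g ∈ Subgroup.closure ({mOrigamiA py, mOrigamiB px} : Set (Equiv.Perm (Fin 4 × Fin d))),
        g p = q :=
  mOrigami_transitive_general px py htrans
end

section
/- Fix d ≥ 1 and permutations p_x, p_y of Fin d such that the subgroup generated by p_x and p_y acts transitively on Fin d, let p_z := p_x⁻¹ ∘ p_y⁻¹, and let (m_A, m_B) be the M-Origami pair associated to (p_x, p_y). Then the commutator K := m_A ∘ m_B ∘ m_A⁻¹ ∘ m_B⁻¹ satisfies c(K) = c(p_x²) + c(p_y²) + c(p_z²) + d. (Geometrically: the number of punctures of the M-Origami equals n(0) + n(1) + n(λ) + n(∞).) -/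
/-- `c(σ)`: the number of orbits of the cyclic group generated by `σ`
(i.e., the number of cycles of `σ`, counting fixed points as cycles of length 1). -/
noncomputable def cyc {S : Type*} (σ : Equiv.Perm S) : ℕ :=
  Nat.card (MulAction.orbitRel.Quotient (Subgroup.zpowers σ) S)

/-- `e(σ)`: the number of orbits of the cyclic group generated by `σ` of even cardinality. -/
noncomputable def evenCyc {S : Type*} (σ : Equiv.Perm S) : ℕ :=
  Nat.card {ω : MulAction.orbitRel.Quotient (Subgroup.zpowers σ) S // Even (Nat.card ω.orbit)}

/-- Shear by the identity in the first factor, as a monoid hom. -/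
def shearHom {α β : Type*} : (α → Equiv.Perm β) →* Equiv.Perm (α × β) where
  toFun f := Equiv.prodShear (Equiv.refl α) f
  map_one' := by ext ⟨a, b⟩ <;> simp [Equiv.prodShear]
  map_mul' f g := by ext ⟨a, b⟩ <;> simp [Equiv.prodShear, Equiv.Perm.mul_apply]

lemma shearHom_apply {α β : Type*} (f : α → Equiv.Perm β) (a : α) (b : β) :
    shearHom f (a, b) = (a, f a b) := rfl

lemma shearHom_zpow_apply {α β : Type*} (f : α → Equiv.Perm β) (k : ℤ) (a : α) (b : β) :
    ((shearHom f) ^ k) (a, b) = (a, ((f a) ^ k) b) := by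
  rw [← map_zpow]
  exact shearHom_apply _ a b

/-- Orbits of a fiber-preserving permutation are fibered over orbits in the fibers. -/
def shearOrbitEquiv {α β : Type*} (f : α → Equiv.Perm β) :
    MulAction.orbitRel.Quotient (Subgroup.zpowers (shearHom f)) (α × β) ≃
      Σ a : α, MulAction.orbitRel.Quotient (Subgroup.zpowers (f a)) β where
  toFun := Quotient.lift (fun p : α × β =>
      (⟨p.1, Quotient.mk (MulAction.orbitRel (Subgroup.zpowers (f p.1)) β) p.2⟩ :
        Σ a : α, MulAction.orbitRel.Quotient (Subgroup.zpowers (f a)) β)) (by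
    rintro ⟨a, b⟩ ⟨a', b'⟩ h
    obtain ⟨⟨g, hg⟩, hgp⟩ := h
    obtain ⟨k, rfl⟩ := Subgroup.mem_zpowers_iff.mp hg
    have : ((shearHom f) ^ k) (a', b') = (a, b) := hgp
    rw [shearHom_zpow_apply] at this
    obtain ⟨rfl, hb⟩ := Prod.mk.injEq .. ▸ this
    refine Sigma.ext rfl (heq_of_eq (Quotient.sound ?_))
    exact ⟨⟨(f a') ^ k, Subgroup.zpow_mem _ (Subgroup.mem_zpowers _) k⟩, hb⟩)
  invFun := fun s => Quotient.lift (fun b =>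
      Quotient.mk (MulAction.orbitRel (Subgroup.zpowers (shearHom f)) (α × β)) (s.1, b)) (by
    rintro b b' h
    obtain ⟨⟨g, hg⟩, hgb⟩ := h
    obtain ⟨k, rfl⟩ := Subgroup.mem_zpowers_iff.mp hg
    refine Quotient.sound ⟨⟨(shearHom f) ^ k, Subgroup.zpow_mem _ (Subgroup.mem_zpowers _) k⟩, ?_⟩
    show ((shearHom f) ^ k) (s.1, b') = (s.1, b)
    rw [shearHom_zpow_apply]
    exact congrArg _ hgb) s.2
  left_inv := by
    rintro ⟨⟨a, b⟩⟩
    rfl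
  right_inv := by
    rintro ⟨a, ⟨b⟩⟩
    rfl

lemma cyc_shearHom {α β : Type*} [Fintype α] [Finite β] (f : α → Equiv.Perm β) :
    cyc (shearHom f) = ∑ a, cyc (f a) := by
  have h := Nat.card_congr (shearOrbitEquiv f)
  unfold cyc
  rw [h]
  haveI : ∀ a, Fintype (MulAction.orbitRel.Quotient (Subgroup.zpowers (f a)) β) :=
    fun a => Fintype.ofFinite _
  simp [Nat.card_eq_fintype_card, Fintype.card_sigma]

lemma cyc_one {β : Type*} : cyc (1 : Equiv.Perm β) = Nat.card β := by
  refine Nat.card_congr ⟨Quotient.lift id ?_, fun b => Quotient.mk _ b, ?_, fun b => rfl⟩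
  · rintro b b' ⟨⟨g, hg⟩, hgb⟩
    obtain ⟨k, rfl⟩ := Subgroup.mem_zpowers_iff.mp hg
    simpa using hgb.symm
  · rintro ⟨b⟩; rfl

lemma cyc_inv {β : Type*} (σ : Equiv.Perm β) : cyc σ⁻¹ = cyc σ := by
  unfold cyc
  rw [Subgroup.zpowers_inv]

lemma mOrigami_commutator_eq {d : ℕ} (px py : Equiv.Perm (Fin d)) :
    mOrigamiA py * mOrigamiB px * (mOrigamiA py)⁻¹ * (mOrigamiB px)⁻¹
      = shearHom ![(py * px) ^ 2, (px⁻¹) ^ 2, (py⁻¹) ^ 2, 1] := by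
  rw [mul_inv_eq_iff_eq_mul, mul_inv_eq_iff_eq_mul]
  ext ⟨i, j⟩ <;> fin_cases i <;>
    simp (config := { decide := true }) [mOrigamiA, mOrigamiB, shearHom, Equiv.prodShear,
      Equiv.Perm.mul_apply, Equiv.swap_apply_def, pow_two]

/-- The number of punctures of the M-Origami: for a transitive dessin pair `(p_x, p_y)` of
degree `d`, the commutator `K = m_A ∘ m_B ∘ m_A⁻¹ ∘ m_B⁻¹` satisfies
`c(K) = c(p_x²) + c(p_y²) + c(p_z²) + d`. -/
theorem mOrigami_punctures {d : ℕ} (hd : 1 ≤ d) (px py : Equiv.Perm (Fin d))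
    (htrans : ∀ i j : Fin d,
      ∃ g ∈ Subgroup.closure ({px, py} : Set (Equiv.Perm (Fin d))), g i = j) :
    cyc (mOrigamiA py * mOrigamiB px * (mOrigamiA py)⁻¹ * (mOrigamiB px)⁻¹)
      = cyc (px * px) + cyc (py * py) + cyc ((px⁻¹ * py⁻¹) * (px⁻¹ * py⁻¹)) + d := by
  rw [mOrigami_commutator_eq, cyc_shearHom, Fin.sum_univ_four]
  have h0 : (![(py * px) ^ 2, (px⁻¹) ^ 2, (py⁻¹) ^ 2, 1] : Fin 4 → Equiv.Perm (Fin d)) 0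
      = (py * px) ^ 2 := rfl
  have hz : (px⁻¹ * py⁻¹) * (px⁻¹ * py⁻¹) = ((py * px) ^ 2)⁻¹ := by rw [pow_two, mul_inv_rev, mul_inv_rev]
  have hx : (px⁻¹ : Equiv.Perm (Fin d)) ^ 2 = (px * px)⁻¹ := by group
  have hy : (py⁻¹ : Equiv.Perm (Fin d)) ^ 2 = (py * py)⁻¹ := by group
  rw [show (![(py * px) ^ 2, (px⁻¹) ^ 2, (py⁻¹) ^ 2, 1] : Fin 4 → Equiv.Perm (Fin d)) 0
      = (py * px) ^ 2 from rfl,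
    show (![(py * px) ^ 2, (px⁻¹) ^ 2, (py⁻¹) ^ 2, 1] : Fin 4 → Equiv.Perm (Fin d)) 1
      = (px⁻¹) ^ 2 from rfl,
    show (![(py * px) ^ 2, (px⁻¹) ^ 2, (py⁻¹) ^ 2, 1] : Fin 4 → Equiv.Perm (Fin d)) 2
      = (py⁻¹) ^ 2 from rfl,
    show (![(py * px) ^ 2, (px⁻¹) ^ 2, (py⁻¹) ^ 2, 1] : Fin 4 → Equiv.Perm (Fin d)) 3
      = 1 from rfl,
    hz, hx, hy, cyc_inv, cyc_inv, cyc_inv, cyc_one]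
  simp [Nat.card_eq_fintype_card]
  omega
end

section
/- Fix d ≥ 1 and permutations p_x, p_y of Fin d, and let (m_A, m_B) be the M-Origami pair associated to (p_x, p_y). Then the pair (m_B⁻¹, m_A) is simultaneously conjugate (as a pair of permutations of (Fin 4) × (Fin d)) to the M-Origami pair associated to (p_y, p_x). (This expresses that S · O_β is the M-Origami associated to the pair (p_y, p_x).) -/
/-- The base permutation of the conjugator: `0 ↦ 1, 1 ↦ 3, 2 ↦ 0, 3 ↦ 2`. -/
def sPerm : Equiv.Perm (Fin 4) where
  toFun := ![1, 3, 0, 2]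
  invFun := ![2, 0, 3, 1]
  left_inv := by decide
  right_inv := by decide

/-- `S · O_β` is the M-Origami associated to `(p_y, p_x)`: the pair `(m_B⁻¹, m_A)` is
simultaneously conjugate to the M-Origami pair associated to `(p_y, p_x)`. -/
theorem mOrigami_S_action {d : ℕ} (hd : 1 ≤ d) (px py : Equiv.Perm (Fin d)) :
    ∃ c : Equiv.Perm (Fin 4 × Fin d),
      c * (mOrigamiB px)⁻¹ * c⁻¹ = mOrigamiA px ∧
      c * mOrigamiA py * c⁻¹ = mOrigamiB py := by
  refine ⟨Equiv.prodCongr sPerm (Equiv.refl (Fin d)), ?_, ?_⟩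
  · have key : (Equiv.prodCongr sPerm (Equiv.refl (Fin d))) =
        mOrigamiA px * (Equiv.prodCongr sPerm (Equiv.refl (Fin d))) * mOrigamiB px := by
      ext ⟨i, j⟩
      · fin_cases i <;>
          simp [mOrigamiA, mOrigamiB, sPerm, Equiv.prodShear, Equiv.prodCongr,
            Equiv.Perm.mul_apply, Equiv.swap_apply_def] <;> decide
      · fin_cases i <;>
          simp [mOrigamiA, mOrigamiB, sPerm, Equiv.prodShear, Equiv.prodCongr,
            Equiv.Perm.mul_apply, Equiv.swap_apply_def]
    rw [mul_inv_eq_iff_eq_mul, mul_inv_eq_iff_eq_mul]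
    exact key
  · have key : (Equiv.prodCongr sPerm (Equiv.refl (Fin d))) * mOrigamiA py =
        mOrigamiB py * (Equiv.prodCongr sPerm (Equiv.refl (Fin d))) := by
      ext ⟨i, j⟩
      · fin_cases i <;>
          simp [mOrigamiA, mOrigamiB, sPerm, Equiv.prodShear, Equiv.prodCongr,
            Equiv.Perm.mul_apply, Equiv.swap_apply_def] <;> decide
      · fin_cases i <;>
          simp [mOrigamiA, mOrigamiB, sPerm, Equiv.prodShear, Equiv.prodCongr,
            Equiv.Perm.mul_apply, Equiv.swap_apply_def]
    rw [mul_inv_eq_iff_eq_mul]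
    exact key
end

section
/- Fix d ≥ 1 and permutations p_x, p_y of Fin d, let p_z := p_x⁻¹ ∘ p_y⁻¹, and let (m_A, m_B) be the M-Origami pair associated to (p_x, p_y). Then the pair (m_A, m_A⁻¹ ∘ m_B) is simultaneously conjugate (as a pair of permutations of (Fin 4) × (Fin d)) to the M-Origami pair associated to (p_z, p_y). (This expresses that T · O_β is the M-Origami associated to the pair (p_z, p_y).) -/
/-- `T · O_β` is the M-Origami associated to `(p_z, p_y)`: the pair `(m_A, m_A⁻¹ ∘ m_B)` is
simultaneously conjugate to the M-Origami pair associated to `(p_z, p_y)`,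
where `p_z = p_x⁻¹ ∘ p_y⁻¹`. -/
theorem mOrigami_T_action {d : ℕ} (hd : 1 ≤ d) (px py : Equiv.Perm (Fin d)) :
    ∃ c : Equiv.Perm (Fin 4 × Fin d),
      c * mOrigamiA py * c⁻¹ = mOrigamiA py ∧
      c * ((mOrigamiA py)⁻¹ * mOrigamiB px) * c⁻¹ = mOrigamiB (px⁻¹ * py⁻¹) := by
  set c : Equiv.Perm (Fin 4 × Fin d) :=
    Equiv.prodShear (Equiv.swap 2 3 : Equiv.Perm (Fin 4))
      (fun i => if i = 3 then Equiv.refl (Fin d) else py) with hc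
  have h1 : c * mOrigamiA py = mOrigamiA py * c := by
    ext ⟨i, j⟩ <;> fin_cases i <;>
      simp (config := { decide := true }) [hc, mOrigamiA, Equiv.Perm.mul_apply,
        Equiv.swap_apply_def, Fin.ext_iff]
  have h2 : c * mOrigamiB px = mOrigamiA py * mOrigamiB (px⁻¹ * py⁻¹) * c := by
    ext ⟨i, j⟩ <;> fin_cases i <;>
      simp (config := { decide := true }) [hc, mOrigamiA, mOrigamiB, Equiv.Perm.mul_apply,
        Equiv.swap_apply_def, Fin.ext_iff]
  have hcomm : Commute c (mOrigamiA py) := h1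
  refine ⟨c, ?_, ?_⟩
  · rw [h1, mul_assoc, mul_inv_cancel, mul_one]
  · have : c * ((mOrigamiA py)⁻¹ * mOrigamiB px) = mOrigamiB (px⁻¹ * py⁻¹) * c := by
      rw [← mul_assoc, hcomm.inv_right.eq, mul_assoc, h2, ← mul_assoc, ← mul_assoc,
        inv_mul_cancel, one_mul]
    rw [this, mul_assoc, mul_inv_cancel, mul_one]
end

section
/- Fix d ≥ 1 and permutations p_x, p_y of Fin d, and let (m_A, m_B) be the M-Origami pair associated to (p_x, p_y). Then the pair (m_A⁻¹, m_B⁻¹) is simultaneously conjugate to the pair (m_A, m_B); explicitly, the involution c₃ of (Fin 4) × (Fin d) given by c₃(1,j)=(4,j), c₃(4,j)=(1,j), c₃(2,j)=(3,j), c₃(3,j)=(2,j) satisfies c₃ ∘ m_A ∘ c₃ = m_A⁻¹ and c₃ ∘ m_B ∘ c₃ = m_B⁻¹. (This expresses that −I lies in the Veech group of every M-Origami.) -/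
/-- The involution `c₃` exchanging squares `0 ↔ 3` and `1 ↔ 2` (i.e. `1 ↔ 4`, `2 ↔ 3` in the
labelling `1,2,3,4`) in each fibre. -/
def cThree (d : ℕ) : Equiv.Perm (Fin 4 × Fin d) :=
  Equiv.prodCongr (Equiv.swap 0 3 * Equiv.swap 1 2 : Equiv.Perm (Fin 4)) (Equiv.refl (Fin d))

private lemma conj_helper {G : Type*} [Group G] {c m : G} (h : c * m * c = m⁻¹)
    (hc : c * c = 1) : c * m⁻¹ * c⁻¹ = m := by
  have hci : c⁻¹ = c := inv_eq_of_mul_eq_one_left hc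
  rw [← h, hci]
  calc c * (c * m * c) * c = (c * c) * m * (c * c) := by group
    _ = m := by rw [hc]; group

/-- `−I` lies in the Veech group of every M-Origami: the pair `(m_A⁻¹, m_B⁻¹)` is simultaneously
conjugate to `(m_A, m_B)`; explicitly, the involution `c₃` conjugates `m_A` to `m_A⁻¹` and
`m_B` to `m_B⁻¹`. -/
theorem mOrigami_negI {d : ℕ} (hd : 1 ≤ d) (px py : Equiv.Perm (Fin d)) :
    (∃ c : Equiv.Perm (Fin 4 × Fin d),
      c * (mOrigamiA py)⁻¹ * c⁻¹ = mOrigamiA py ∧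
      c * (mOrigamiB px)⁻¹ * c⁻¹ = mOrigamiB px) ∧
    cThree d * mOrigamiA py * cThree d = (mOrigamiA py)⁻¹ ∧
    cThree d * mOrigamiB px * cThree d = (mOrigamiB px)⁻¹ := by
  have hA : cThree d * mOrigamiA py * cThree d = (mOrigamiA py)⁻¹ := by
    rw [eq_inv_iff_mul_eq_one]
    ext ⟨i, j⟩ <;> fin_cases i <;>
      simp (config := { decide := true })
        [cThree, mOrigamiA, Equiv.swap_apply_def, Equiv.Perm.mul_apply, Fin.ext_iff]
  have hB : cThree d * mOrigamiB px * cThree d = (mOrigamiB px)⁻¹ := by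
    rw [eq_inv_iff_mul_eq_one]
    ext ⟨i, j⟩ <;> fin_cases i <;>
      simp (config := { decide := true })
        [cThree, mOrigamiB, Equiv.swap_apply_def, Equiv.Perm.mul_apply, Fin.ext_iff]
  have hc : cThree d * cThree d = 1 := by
    ext ⟨i, j⟩ <;> fin_cases i <;>
      simp (config := { decide := true })
        [cThree, Equiv.swap_apply_def, Equiv.Perm.mul_apply, Fin.ext_iff]
  exact ⟨⟨cThree d, conj_helper hA hc, conj_helper hB hc⟩, hA, hB⟩
end

section
/- Fix d ≥ 1 and permutations p_x, p_y of Fin d. For every permutation q of Fin d, the M-Origami pair associated to (q∘p_x∘q⁻¹, q∘p_y∘q⁻¹) is simultaneously conjugate to the M-Origami pair associated to (p_x, p_y). (In particular, simultaneously conjugate dessin pairs yield isomorphic M-Origamis; this is the key step showing T² and S·T⁻²·S⁻¹ stabilize every M-Origami, i.e., Γ(2) ⊆ Γ(O_β).) -/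
theorem Equiv.Perm.prodCongr_refl_mul_prodShear_mul_inv {α β : Type*} (e : Perm α)
    (f : α → Perm β) (q : Perm β) :
    ((Equiv.refl α).prodCongr q : Perm (α × β)) * prodShear e f * ((Equiv.refl α).prodCongr q)⁻¹ =
      prodShear e (fun a => q * f a * q⁻¹) := by
  ext ⟨a, b⟩ <;> rfl

section

variable {d : ℕ} (q : Equiv.Perm (Fin d))

theorem mOrigamiA_conj (py : Equiv.Perm (Fin d)) :
    mOrigamiA (q * py * q⁻¹) = (Equiv.refl (Fin 4)).prodCongr q * mOrigamiA py *
      ((Equiv.refl (Fin 4)).prodCongr q)⁻¹ := by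
  rw [mOrigamiA, mOrigamiA, Equiv.Perm.prodCongr_refl_mul_prodShear_mul_inv]
  congr 1
  funext i
  split_ifs <;> simp [← Equiv.Perm.one_def, mul_assoc]

theorem mOrigamiB_conj (px : Equiv.Perm (Fin d)) :
    mOrigamiB (q * px * q⁻¹) = (Equiv.refl (Fin 4)).prodCongr q * mOrigamiB px *
      ((Equiv.refl (Fin 4)).prodCongr q)⁻¹ := by
  rw [mOrigamiB, mOrigamiB, Equiv.Perm.prodCongr_refl_mul_prodShear_mul_inv]
  congr 1
  funext i
  split_ifs <;> simp [← Equiv.Perm.one_def, mul_assoc]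

end

theorem mOrigami_conj_general {d : ℕ} (px py : Equiv.Perm (Fin d))
    (q : Equiv.Perm (Fin d)) :
    ∃ c : Equiv.Perm (Fin 4 × Fin d),
      c * mOrigamiA (q * py * q⁻¹) * c⁻¹ = mOrigamiA py ∧
      c * mOrigamiB (q * px * q⁻¹) * c⁻¹ = mOrigamiB px := by
  refine ⟨((Equiv.refl (Fin 4)).prodCongr q)⁻¹, ?_, ?_⟩
  · rw [mOrigamiA_conj]; group
  · rw [mOrigamiB_conj]; group

/-- Simultaneously conjugate dessin pairs yield simultaneously conjugate M-Origami pairs: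
for any `q`, the M-Origami pair of `(q p_x q⁻¹, q p_y q⁻¹)` is simultaneously conjugate to
the M-Origami pair of `(p_x, p_y)`. -/
theorem mOrigami_conj {d : ℕ} (hd : 1 ≤ d) (px py : Equiv.Perm (Fin d))
    (q : Equiv.Perm (Fin d)) :
    ∃ c : Equiv.Perm (Fin 4 × Fin d),
      c * mOrigamiA (q * py * q⁻¹) * c⁻¹ = mOrigamiA py ∧
      c * mOrigamiB (q * px * q⁻¹) * c⁻¹ = mOrigamiB px :=
  mOrigami_conj_general px py q
end

section
/- Fix d ≥ 1 and permutations p_x, p_y of Fin d, and let (m_A, m_B) be the M-Origami pair associated to (p_x, p_y). Then the multiset of cardinalities of the orbits of ⟨m_A⟩ on (Fin 4) × (Fin d) is obtained from the multiset of cardinalities of the orbits of ⟨p_y⟩ on Fin d by doubling each cardinality and taking each resulting value with twice its multiplicity; i.e., every orbit of ⟨p_y⟩ of cardinality l gives rise to exactly two orbits of ⟨m_A⟩ of cardinality 2l, and all orbits of ⟨m_A⟩ arise this way. (This describes the horizontal cylinder structure of the M-Origami.) -/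
open scoped Classical in
/-- The multiset of cardinalities of the orbits of `⟨σ⟩` on `S`. -/
noncomputable def orbitCards {S : Type*} [Fintype S] (σ : Equiv.Perm S) : Multiset ℕ :=
  (Finset.univ : Finset (MulAction.orbitRel.Quotient (Subgroup.zpowers σ) S)).val.map
    fun ω => Nat.card ω.orbit

/-!
`m_A` preserves the pair of squares `{0, 1}` and the pair `{2, 3}`, and `m_A²` acts on square `0`
as `p_y` and on square `2` as `p_y⁻¹`. Hence the orbits of `⟨m_A⟩` are exactly the sets
`{0, 1} × O` and `{2, 3} × O` for `O` an orbit of `⟨p_y⟩`, i.e. the fibres of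
`(i, j) ↦ (2 ≤ i, [j])`, and each has twice the size of `O`.
-/

open MulAction Subgroup

namespace Equiv.Perm

variable {S Q : Type*}

theorem apply_zpow_apply_eq_of_invariant {σ : Perm S} {f : S → Q} (hf : ∀ x, f (σ x) = f x)
    (k : ℤ) (x : S) : f ((σ ^ k) x) = f x := by
  induction k using Int.induction_on generalizing x with
  | zero => rfl
  | succ k ih => rw [zpow_add_one, mul_apply, ih, hf]
  | pred k ih => rw [zpow_sub_one, mul_apply, ih, ← hf (σ⁻¹ x), coe_inv, apply_symm_apply]

theorem apply_eq_of_mem_orbit_zpowers {σ : Perm S} {f : S → Q} (hf : ∀ x, f (σ x) = f x)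
    {x y : S} (h : y ∈ orbit (zpowers σ) x) : f y = f x := by
  obtain ⟨⟨_, k, rfl⟩, rfl⟩ := h
  exact apply_zpow_apply_eq_of_invariant hf k x

theorem orbitRel_mk_apply (σ : Perm S) (x : S) :
    (⟦σ x⟧ : orbitRel.Quotient (zpowers σ) S) = ⟦x⟧ :=
  orbitRel.Quotient.quotient_smul_eq (g := (⟨σ, mem_zpowers σ⟩ : zpowers σ))

theorem orbitRel_mk_inv_apply (σ : Perm S) (x : S) :
    (⟦σ⁻¹ x⟧ : orbitRel.Quotient (zpowers σ) S) = ⟦x⟧ := by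
  rw [← orbitRel_mk_apply σ (σ⁻¹ x), coe_inv, apply_symm_apply]

end Equiv.Perm

theorem orbitCards_eq_map_card_fiber {S Q : Type*} [Fintype S] [Fintype Q] (σ : Equiv.Perm S)
    (f : S → Q) (hf : Function.Surjective f)
    (hker : ∀ x y, (⟦x⟧ : orbitRel.Quotient (zpowers σ) S) = ⟦y⟧ ↔ f x = f y) :
    orbitCards σ = Finset.univ.val.map fun q => Nat.card (f ⁻¹' {q}) := by
  classical
  let e : orbitRel.Quotient (zpowers σ) S ≃ Q :=
    Equiv.ofBijective (Quotient.lift f fun x y h => (hker x y).mp (Quotient.sound h))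
      ⟨by rintro ⟨x⟩ ⟨y⟩ h; exact (hker x y).mpr h, fun q => (hf q).elim fun x hx => ⟨⟦x⟧, hx⟩⟩
  have horbit (ω) : ω.orbit = f ⁻¹' {e ω} := by
    induction ω using Quotient.inductionOn with | h x => ?_
    ext y
    exact orbitRel.Quotient.mem_orbit.trans (hker y x)
  rw [← Multiset.map_univ_val_equiv e, Multiset.map_map]
  unfold orbitCards
  convert rfl using 3 with ω
  simp [horbit]

theorem Multiset.map_univ_val_bool_prod {α β : Type*} [Fintype α] (g : α → β) :
    (Finset.univ : Finset (Bool × α)).val.map (fun q => g q.2) =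
      Finset.univ.val.map g + Finset.univ.val.map g := by
  rw [← Multiset.map_univ_val_equiv (Equiv.boolProdEquivSum α).symm, ← Finset.univ_disjSum_univ,
    Finset.val_disjSum, Multiset.disjSum]
  simp only [Multiset.map_add, Multiset.map_map]
  rfl

namespace MOrigami

variable {d : ℕ} (py : Equiv.Perm (Fin d))

@[simp] theorem mOrigamiA_zero (j : Fin d) : mOrigamiA py (0, j) = (1, j) := rfl

@[simp] theorem mOrigamiA_one (j : Fin d) : mOrigamiA py (1, j) = (0, py j) := rfl

@[simp] theorem mOrigamiA_two (j : Fin d) : mOrigamiA py (2, j) = (3, j) := rfl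

@[simp] theorem mOrigamiA_three (j : Fin d) : mOrigamiA py (3, j) = (2, py⁻¹ j) := rfl

def cylinder (x : Fin 4 × Fin d) : Bool × orbitRel.Quotient (zpowers py) (Fin d) :=
  (2 ≤ x.1.val, ⟦x.2⟧)

def cylinderBase : Bool → Fin 4
  | false => 0
  | true => 2

theorem cylinder_surjective : Function.Surjective (cylinder py) := by
  rintro ⟨b, ⟨j⟩⟩
  exact ⟨(cylinderBase b, j), by cases b <;> rfl⟩

theorem cylinder_mOrigamiA (x : Fin 4 × Fin d) :
    cylinder py (mOrigamiA py x) = cylinder py x := by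
  obtain ⟨i, j⟩ := x
  fin_cases i <;>
    simp only [cylinder, Fin.zero_eta, Fin.mk_one, Fin.reduceFinMk, mOrigamiA_zero, mOrigamiA_one,
      mOrigamiA_two, mOrigamiA_three, Equiv.Perm.orbitRel_mk_apply,
      Equiv.Perm.orbitRel_mk_inv_apply] <;> rfl

theorem mk_eq_mk_cylinderBase (i : Fin 4) (j : Fin d) :
    (⟦(i, j)⟧ : orbitRel.Quotient (zpowers (mOrigamiA py)) _) =
      ⟦(cylinderBase (2 ≤ i.val), j)⟧ := by
  fin_cases i
  · rfl
  · simpa [cylinderBase] using Equiv.Perm.orbitRel_mk_apply (mOrigamiA py) (0, j)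
  · rfl
  · simpa [cylinderBase] using Equiv.Perm.orbitRel_mk_apply (mOrigamiA py) (2, j)

theorem mk_cylinderBase_apply (b : Bool) (j : Fin d) :
    (⟦(cylinderBase b, py j)⟧ : orbitRel.Quotient (zpowers (mOrigamiA py)) _) =
      ⟦(cylinderBase b, j)⟧ := by
  cases b
  · have h : ((0 : Fin 4), py j) = mOrigamiA py (mOrigamiA py (0, j)) := by simp
    simp only [cylinderBase]
    rw [h, Equiv.Perm.orbitRel_mk_apply, Equiv.Perm.orbitRel_mk_apply]
  · have h : ((2 : Fin 4), j) = mOrigamiA py (mOrigamiA py (2, py j)) := by simp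
    simp only [cylinderBase]
    rw [h, Equiv.Perm.orbitRel_mk_apply, Equiv.Perm.orbitRel_mk_apply]

theorem mk_eq_mk_iff_cylinder_eq (x y : Fin 4 × Fin d) :
    (⟦x⟧ : orbitRel.Quotient (zpowers (mOrigamiA py)) _) = ⟦y⟧ ↔
      cylinder py x = cylinder py y := by
  refine ⟨fun h => Equiv.Perm.apply_eq_of_mem_orbit_zpowers (cylinder_mOrigamiA py)
    (Quotient.exact h), fun h => ?_⟩
  obtain ⟨i, j⟩ := x
  obtain ⟨i', j'⟩ := y
  obtain ⟨hi, hj⟩ := Prod.mk.inj h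
  rw [mk_eq_mk_cylinderBase py i, mk_eq_mk_cylinderBase py i', hi]
  exact Equiv.Perm.apply_eq_of_mem_orbit_zpowers
    (f := fun j => (⟦(cylinderBase _, j)⟧ : orbitRel.Quotient (zpowers (mOrigamiA py)) _))
    (mk_cylinderBase_apply py _) (Quotient.exact hj)

theorem cylinder_preimage (b : Bool) (ω : orbitRel.Quotient (zpowers py) (Fin d)) :
    cylinder py ⁻¹' {(b, ω)} = {i : Fin 4 | (2 ≤ i.val : Bool) = b} ×ˢ ω.orbit := by
  ext ⟨i, j⟩
  simp [cylinder, orbitRel.Quotient.mem_orbit]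

theorem card_cylinder_preimage (q : Bool × orbitRel.Quotient (zpowers py) (Fin d)) :
    Nat.card (cylinder py ⁻¹' {q}) = 2 * Nat.card q.2.orbit := by
  obtain ⟨b, ω⟩ := q
  rw [cylinder_preimage, Nat.card_coe_set_eq, Set.ncard_prod, Nat.card_coe_set_eq]
  congr
  rw [Set.ncard_eq_toFinset_card']
  cases b <;> rfl

end MOrigami

theorem mOrigami_cylinders_general {d : ℕ} (py : Equiv.Perm (Fin d)) :
    orbitCards (mOrigamiA py) = (orbitCards py + orbitCards py).map (fun l => 2 * l) := by
  classical
  rw [orbitCards_eq_map_card_fiber _ _ (MOrigami.cylinder_surjective py)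
      (MOrigami.mk_eq_mk_iff_cylinder_eq py), funext (MOrigami.card_cylinder_preimage py),
    Multiset.map_univ_val_bool_prod
      fun ω : orbitRel.Quotient (zpowers py) (Fin d) => 2 * Nat.card ω.orbit, Multiset.map_add, orbitCards, Multiset.map_map]
  rfl

/-- Horizontal cylinder structure of an M-Origami: every orbit of `⟨p_y⟩` of cardinality `l`
gives rise to exactly two orbits of `⟨m_A⟩` of cardinality `2l`, and all orbits of `⟨m_A⟩`
arise this way. -/
theorem mOrigami_cylinders {d : ℕ} (hd : 1 ≤ d) (px py : Equiv.Perm (Fin d)) :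
    orbitCards (mOrigamiA py) = (orbitCards py + orbitCards py).map (fun l => 2 * l) :=
  mOrigami_cylinders_general py
end

section
/- Let n ≥ 2 and define the permutations p_x, p_y, c, d of (ZMod n) × (ZMod n) by p_x(k,l) = (k+1, l), p_y(k,l) = (k, l+1), c(k,l) = (l,k), d(k,l) = (−k, l−k), and set p_z := p_x⁻¹ ∘ p_y⁻¹. Then: (i) the subgroup generated by p_x and p_y acts transitively on (ZMod n) × (ZMod n); (ii) c and d are involutions (c² = d² = id); and (iii) c⁻¹∘p_x∘c = p_y, c⁻¹∘p_y∘c = p_x, d⁻¹∘p_x∘d = p_z, and d⁻¹∘p_y∘d = p_y. (This shows the dessin K_n has full weak automorphism group W ≅ S₃, so the associated M-Origami has Veech group SL₂(ℤ).) -/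
/-- `p_x (k, l) = (k + 1, l)`. -/
def Kx (n : ℕ) : Equiv.Perm (ZMod n × ZMod n) :=
  Equiv.prodCongr (Equiv.addRight (1 : ZMod n)) (Equiv.refl (ZMod n))

/-- `p_y (k, l) = (k, l + 1)`. -/
def Ky (n : ℕ) : Equiv.Perm (ZMod n × ZMod n) :=
  Equiv.prodCongr (Equiv.refl (ZMod n)) (Equiv.addRight (1 : ZMod n))

/-- `c (k, l) = (l, k)`. -/
def Kc (n : ℕ) : Equiv.Perm (ZMod n × ZMod n) := Equiv.prodComm (ZMod n) (ZMod n)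

/-- `d (k, l) = (−k, l − k)`. -/
def Kd (n : ℕ) : Equiv.Perm (ZMod n × ZMod n) where
  toFun p := (-p.1, p.2 - p.1)
  invFun p := (-p.1, p.2 - p.1)
  left_inv p := by obtain ⟨k, l⟩ := p; simp [Prod.ext_iff]
  right_inv p := by obtain ⟨k, l⟩ := p; simp [Prod.ext_iff]

lemma Kx_pow (n a : ℕ) (u : ZMod n × ZMod n) : ((Kx n)^a) u = (u.1 + a, u.2) := by
  induction a with
  | zero => simp
  | succ a ih => rw [pow_succ', Equiv.Perm.mul_apply, ih]; simp [Kx]; ring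

lemma Ky_pow (n a : ℕ) (u : ZMod n × ZMod n) : ((Ky n)^a) u = (u.1, u.2 + a) := by
  induction a with
  | zero => simp
  | succ a ih => rw [pow_succ', Equiv.Perm.mul_apply, ih]; simp [Ky]; ring

/-- The dessin `K_n` has full weak automorphism group: `⟨p_x, p_y⟩` is transitive, `c` and `d`
are involutions, and `c⁻¹ p_x c = p_y`, `c⁻¹ p_y c = p_x`, `d⁻¹ p_x d = p_z`, `d⁻¹ p_y d = p_y`
where `p_z = p_x⁻¹ ∘ p_y⁻¹`. -/
theorem Kn_weak_automorphisms (n : ℕ) (hn : 2 ≤ n) :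
    (∀ u v : ZMod n × ZMod n,
      ∃ g ∈ Subgroup.closure ({Kx n, Ky n} : Set (Equiv.Perm (ZMod n × ZMod n))), g u = v) ∧
    Kc n * Kc n = 1 ∧ Kd n * Kd n = 1 ∧
    (Kc n)⁻¹ * Kx n * Kc n = Ky n ∧
    (Kc n)⁻¹ * Ky n * Kc n = Kx n ∧
    (Kd n)⁻¹ * Kx n * Kd n = (Kx n)⁻¹ * (Ky n)⁻¹ ∧
    (Kd n)⁻¹ * Ky n * Kd n = Ky n := by
  haveI : NeZero n := ⟨by omega⟩
  refine ⟨?_, ?_, ?_, ?_, ?_, ?_, ?_⟩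
  · intro u v
    have hx : Kx n ∈ Subgroup.closure ({Kx n, Ky n} : Set (Equiv.Perm (ZMod n × ZMod n))) :=
      Subgroup.subset_closure (by simp)
    have hy : Ky n ∈ Subgroup.closure ({Kx n, Ky n} : Set (Equiv.Perm (ZMod n × ZMod n))) :=
      Subgroup.subset_closure (by simp)
    refine ⟨(Ky n)^((v.2 - u.2).val) * (Kx n)^((v.1 - u.1).val), mul_mem (pow_mem hy _) (pow_mem hx _), ?_⟩
    rw [Equiv.Perm.mul_apply, Kx_pow, Ky_pow]
    simp [ZMod.natCast_val, ZMod.cast_id, Prod.ext_iff]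
  · ext ⟨k, l⟩ <;> simp [Kc]
  · ext ⟨k, l⟩ <;> simp [Kd, Equiv.coe_fn_mk]
  · ext ⟨k, l⟩ <;> simp [Kc, Kx, Ky, Equiv.Perm.inv_def]
  · ext ⟨k, l⟩ <;> simp [Kc, Kx, Ky, Equiv.Perm.inv_def]
  · ext ⟨k, l⟩ <;>
      simp [Kd, Kx, Ky, Equiv.Perm.inv_def, Equiv.prodCongr_symm, Equiv.coe_fn_mk,
        Equiv.coe_fn_symm_mk, sub_eq_iff_eq_add] <;> ring
  · ext ⟨k, l⟩ <;> simp [Kd, Ky, Equiv.Perm.inv_def, Equiv.coe_fn_mk] <;> ring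
end

section
/- Let n ≥ 2 and let (p_x, p_y) be the dessin K_n on (ZMod n) × (ZMod n), with p_z := p_x⁻¹ ∘ p_y⁻¹. Then each of p_x, p_y and p_z has exactly n orbits on (ZMod n) × (ZMod n), each orbit of cardinality n; consequently the Euler-formula genus g(K_n) = (2 + n² − c(p_x) − c(p_y) − c(p_z))/2 equals (n² − 3n + 2)/2. -/
open MulAction

theorem cyc_mul_eq_card_of_card_orbit_eq {S : Type*} [Finite S] (σ : Equiv.Perm S) (d : ℕ)
    (h : ∀ ω : orbitRel.Quotient (Subgroup.zpowers σ) S, Nat.card ω.orbit = d) :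
    cyc σ * d = Nat.card S := by
  have := Fintype.ofFinite (orbitRel.Quotient (Subgroup.zpowers σ) S)
  rw [Nat.card_congr (selfEquivSigmaOrbits' (Subgroup.zpowers σ) S), Nat.card_sigma]
  simp [h, cyc, Nat.card_eq_fintype_card]

section AddGroup

variable {G : Type*} [AddGroup G]

theorem orbit_zpowers_addRight (v p : G) :
    orbit (Subgroup.zpowers (Equiv.addRight v)) p = (p + ·) '' AddSubgroup.zmultiples v := by
  ext q
  simp [mem_orbit_iff, AddSubgroup.mem_zmultiples_iff, eq_neg_add_iff_add_eq]

theorem card_orbit_zpowers_addRight (v : G)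
    (ω : orbitRel.Quotient (Subgroup.zpowers (Equiv.addRight v)) G) :
    Nat.card ω.orbit = addOrderOf v := by
  induction ω using Quotient.inductionOn with
  | h p =>
    rw [orbitRel.Quotient.orbit_mk, orbit_zpowers_addRight,
      Nat.card_image_of_injective (add_right_injective p)]
    exact Nat.card_zmultiples v

theorem cyc_addRight_mul_addOrderOf [Finite G] (v : G) :
    cyc (Equiv.addRight v) * addOrderOf v = Nat.card G :=
  cyc_mul_eq_card_of_card_orbit_eq _ _ (card_orbit_zpowers_addRight v)

end AddGroup

theorem ZMod.cyc_addRight_of_addOrderOf_eq {n : ℕ} [NeZero n] {v : ZMod n × ZMod n}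
    (hv : addOrderOf v = n) : cyc (Equiv.addRight v) = n := by
  have h := cyc_addRight_mul_addOrderOf v
  rw [hv, Nat.card_prod, Nat.card_zmod] at h
  exact Nat.eq_of_mul_eq_mul_right (Nat.pos_of_neZero n) h

theorem Kx_eq_addRight (n : ℕ) : Kx n = Equiv.addRight (1, 0) := by
  ext <;> simp [Kx]

theorem Ky_eq_addRight (n : ℕ) : Ky n = Equiv.addRight (0, 1) := by
  ext <;> simp [Ky]

theorem Kx_inv_mul_Ky_inv_eq_addRight (n : ℕ) :
    (Kx n)⁻¹ * (Ky n)⁻¹ = Equiv.addRight (-1, -1) := by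
  ext <;> simp [Kx_eq_addRight, Ky_eq_addRight]

/-- Each of `p_x`, `p_y`, `p_z` of the dessin `K_n` has exactly `n` orbits, each of
cardinality `n`; consequently the Euler-formula genus of `K_n` is `(n² − 3n + 2)/2`. -/
theorem Kn_genus (n : ℕ) (hn : 2 ≤ n) (pz : Equiv.Perm (ZMod n × ZMod n))
    (hpz : pz = (Kx n)⁻¹ * (Ky n)⁻¹) :
    (cyc (Kx n) = n ∧ cyc (Ky n) = n ∧ cyc pz = n) ∧
    (∀ σ ∈ ({Kx n, Ky n, pz} : Set (Equiv.Perm (ZMod n × ZMod n))),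
      ∀ ω : MulAction.orbitRel.Quotient (Subgroup.zpowers σ) (ZMod n × ZMod n),
        Nat.card ω.orbit = n) ∧
    (2 + (n : ℚ) ^ 2 - cyc (Kx n) - cyc (Ky n) - cyc pz) / 2
      = ((n : ℚ) ^ 2 - 3 * n + 2) / 2 := by
  have : NeZero n := ⟨by omega⟩
  obtain ⟨hx, hy, hz⟩ : addOrderOf ((1, 0) : ZMod n × ZMod n) = n ∧
      addOrderOf ((0, 1) : ZMod n × ZMod n) = n ∧
      addOrderOf ((-1, -1) : ZMod n × ZMod n) = n := by
    simp [Prod.addOrderOf_mk, ZMod.addOrderOf_one]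
  rw [hpz, Kx_inv_mul_Ky_inv_eq_addRight, Kx_eq_addRight, Ky_eq_addRight,
    ZMod.cyc_addRight_of_addOrderOf_eq hx, ZMod.cyc_addRight_of_addOrderOf_eq hy,
    ZMod.cyc_addRight_of_addOrderOf_eq hz]
  refine ⟨⟨rfl, rfl, rfl⟩, ?_, by ring⟩
  rintro σ (rfl | rfl | rfl) ω <;> rw [card_orbit_zpowers_addRight] <;> assumption
end
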